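/- A polynomial p of degree at most 5 is uniquely determined by the six conditions (1/Δx)∫_{I_{i+ℓ}} p = f_{i+ℓ} and (1/Δx)∫_{I_{i+ℓ}} p' = h_{i+ℓ} for ℓ ∈ {−1, 0, 1}, where I_{i+ℓ} = [x_i + (ℓ − 1/2)Δx, x_i + (ℓ + 1/2)Δx], for any Δx > 0 and any real data f_{i+ℓ}, h_{i+ℓ}. -/

import Mathlib

/-!
Substituting `x = xi + Δx t` turns the six conditions into cell means over the unit cells
`[ℓ - 1/2, ℓ + 1/2]` and jumps of the values across them. These are linear functionals on the
six-dimensional space of quintics, so it suffices to show that they have no common kernel: a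
quintic with zero mean on the three unit cells and equal values at the four interfaces
`±1/2, ±3/2` solves a nonsingular homogeneous 6 × 6 system for its coefficients.
-/

open Polynomial intervalIntegral

theorem mem_degreeLT_succ_iff {R : Type*} [Semiring R] {p : R[X]} {n : ℕ} :
    p ∈ degreeLT R (n + 1) ↔ p.natDegree ≤ n := by
  rw [mem_degreeLT, natDegree_le_iff_degree_le, ← Order.lt_succ_iff]
  rfl

theorem integral_eval_eq_sum_range {p : ℝ[X]} {n : ℕ} (hp : p.natDegree < n) (a b : ℝ) :
    ∫ x in a..b, p.eval x =
      ∑ k ∈ Finset.range n, p.coeff k * ((b ^ (k + 1) - a ^ (k + 1)) / (k + 1)) := by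
  simp_rw [eval_eq_sum_range' hp]
  rw [integral_finsetSum fun k _ => (by fun_prop : Continuous _).intervalIntegrable a b]
  simp only [integral_const_mul, integral_pow]

theorem eq_zero_of_unitCell_means_of_jumps {q : ℝ[X]} (hq : q.natDegree ≤ 5)
    (hI : ∀ ℓ ∈ ({-1, 0, 1} : Set ℤ), ∫ t in (ℓ - 1 / 2 : ℝ)..(ℓ + 1 / 2), q.eval t = 0)
    (hJ : ∀ ℓ ∈ ({-1, 0, 1} : Set ℤ), q.eval ((ℓ : ℝ) - 1 / 2) = q.eval ((ℓ : ℝ) + 1 / 2)) :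
    q = 0 := by
  have hq6 : q.natDegree < 6 := by omega
  have hI₁ := hI (-1) (by simp)
  have hI₂ := hI 0 (by simp)
  have hI₃ := hI 1 (by simp)
  have hJ₁ := hJ (-1) (by simp)
  have hJ₂ := hJ 0 (by simp)
  have hJ₃ := hJ 1 (by simp)
  rw [integral_eval_eq_sum_range hq6] at hI₁ hI₂ hI₃
  rw [eval_eq_sum_range' hq6, eval_eq_sum_range' hq6] at hJ₁ hJ₂ hJ₃
  simp only [Finset.sum_range_succ, Finset.sum_range_zero] at hI₁ hI₂ hI₃ hJ₁ hJ₂ hJ₃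
  norm_num at hI₁ hI₂ hI₃ hJ₁ hJ₂ hJ₃
  ext k
  rw [coeff_zero]
  obtain hk | hk := lt_or_ge k 6
  · interval_cases k <;> linarith
  · exact coeff_eq_zero_of_natDegree_lt (by omega)

noncomputable def cellAverage (Δx xi : ℝ) (ℓ : ℤ) : ℝ[X] →ₗ[ℝ] ℝ where
  toFun p := (1 / Δx) * ∫ x in (xi + (ℓ - 1 / 2 : ℝ) * Δx)..(xi + (ℓ + 1 / 2 : ℝ) * Δx), p.eval x
  map_add' p q := by
    rw [← mul_add, ← integral_add (p.continuous.intervalIntegrable _ _)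
      (q.continuous.intervalIntegrable _ _)]
    simp only [eval_add]
  map_smul' c p := by
    simp only [eval_smul, smul_eq_mul, integral_const_mul, RingHom.id_apply]
    ring

noncomputable def hermiteData (Δx xi : ℝ) : ℝ[X] →ₗ[ℝ] (({-1, 0, 1} : Set ℤ) → ℝ × ℝ) :=
  LinearMap.pi fun ℓ => (cellAverage Δx xi ℓ).prod ((cellAverage Δx xi ℓ).comp derivative)

section
variable {Δx : ℝ} (xi : ℝ)

theorem cellAverage_eq_integral_comp (hΔ : Δx ≠ 0) (ℓ : ℤ) (p : ℝ[X]) :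
    cellAverage Δx xi ℓ p =
      ∫ t in (ℓ - 1 / 2 : ℝ)..(ℓ + 1 / 2), (p.comp (C Δx * X + C xi)).eval t := by
  change (1 / Δx) * _ = _
  simp only [eval_comp, eval_add, eval_mul, eval_C, eval_X]
  rw [integral_comp_mul_add (fun x => p.eval x) hΔ, smul_eq_mul, one_div]
  congr 2 <;> ring

theorem cellAverage_derivative (ℓ : ℤ) (p : ℝ[X]) :
    cellAverage Δx xi ℓ (derivative p) = (1 / Δx) *
      ((p.comp (C Δx * X + C xi)).eval ((ℓ : ℝ) + 1 / 2) -
        (p.comp (C Δx * X + C xi)).eval ((ℓ : ℝ) - 1 / 2)) := by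
  change (1 / Δx) * _ = _
  rw [integral_eq_sub_of_hasDerivAt (fun x _ => p.hasDerivAt x)
    ((derivative p).continuous.intervalIntegrable _ _)]
  simp only [eval_comp, eval_add, eval_mul, eval_C, eval_X]
  ring_nf

theorem hermiteData_injective (hΔ : Δx ≠ 0) :
    Function.Injective ((hermiteData Δx xi).domRestrict (degreeLT ℝ 6)) := by
  rw [injective_iff_map_eq_zero]
  rintro ⟨p, hp⟩ hdata
  have hmom : ∀ ℓ ∈ ({-1, 0, 1} : Set ℤ),
      cellAverage Δx xi ℓ p = 0 ∧ cellAverage Δx xi ℓ (derivative p) = 0 := fun ℓ hℓ =>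
    Prod.ext_iff.1 (congrFun hdata ⟨ℓ, hℓ⟩)
  set q := p.comp (C Δx * X + C xi) with hq
  have hq0 : q = 0 := by
    refine eq_zero_of_unitCell_means_of_jumps ?_ (fun ℓ hℓ => ?_) (fun ℓ hℓ => ?_)
    · rw [hq, natDegree_comp, natDegree_add_C, natDegree_C_mul_X _ hΔ, mul_one]
      exact mem_degreeLT_succ_iff.1 hp
    · rw [← cellAverage_eq_integral_comp xi hΔ]; exact (hmom ℓ hℓ).1
    · have := (hmom ℓ hℓ).2
      rw [cellAverage_derivative, mul_eq_zero, sub_eq_zero] at this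
      exact (this.resolve_left (by simpa using hΔ)).symm
  rcases comp_eq_zero_iff.1 hq0 with h | ⟨-, h⟩
  · exact Subtype.ext h
  · exact absurd (by simpa using congrArg (coeff · 1) h) hΔ

theorem hermiteData_bijective (hΔ : Δx ≠ 0) :
    Function.Bijective ((hermiteData Δx xi).domRestrict (degreeLT ℝ 6)) := by
  have hdim : Module.finrank ℝ (degreeLT ℝ 6) =
      Module.finrank ℝ (({-1, 0, 1} : Set ℤ) → ℝ × ℝ) := by
    rw [Module.finrank_eq_card_basis (degreeLT.basis ℝ 6), Module.finrank_pi_fintype]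
    simp
  have hinj := hermiteData_injective xi hΔ
  exact ⟨hinj, (LinearMap.injective_iff_surjective_of_finrank_eq_finrank hdim).1 hinj⟩

end

theorem stmt_9 (Δx xi : ℝ) (hΔ : 0 < Δx) (f h : ℤ → ℝ) :
    ∃! p : Polynomial ℝ, p.natDegree ≤ 5 ∧
      ∀ ℓ : ℤ, ℓ ∈ ({-1, 0, 1} : Set ℤ) →
        (1 / Δx) * (∫ x in (xi + (ℓ - 1 / 2 : ℝ) * Δx)..(xi + (ℓ + 1 / 2 : ℝ) * Δx),
            p.eval x) = f ℓ ∧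
        (1 / Δx) * (∫ x in (xi + (ℓ - 1 / 2 : ℝ) * Δx)..(xi + (ℓ + 1 / 2 : ℝ) * Δx),
            (Polynomial.derivative p).eval x) = h ℓ := by
  obtain ⟨⟨p, hp⟩, hpd, huniq⟩ :=
    (hermiteData_bijective xi hΔ.ne').existsUnique fun ℓ => (f ℓ, h ℓ)
  refine ⟨p, ⟨mem_degreeLT_succ_iff.1 hp, fun ℓ hℓ => Prod.ext_iff.1 (congrFun hpd ⟨ℓ, hℓ⟩)⟩, ?_⟩
  rintro q ⟨hq, hqd⟩
  exact congrArg Subtype.val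
    (huniq ⟨q, mem_degreeLT_succ_iff.2 hq⟩ (funext fun ℓ => Prod.ext (hqd ℓ ℓ.2).1 (hqd ℓ ℓ.2).2))
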